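/- arXiv:0708.2510 — 3 statements merged into one kernel-verified Lean document; each statement's English description precedes it below -/
import Mathlib

section
/- Let H be a complex Hilbert space, J a signature operator on H, L a densely defined positive self-adjoint operator in H, and B := JL, and assume B is similar to a self-adjoint operator in H. Fix 0 < τ < ∞. Then there exists a constant C > 0 such that for all φ₊ ∈ H₊, φ₋ ∈ H₋, every strong solution ψ of the boundary value problem dψ/dx = −Bψ(x) (0 < x < τ), P₊ψ(0) = φ₊, P₋ψ(τ) = φ₋ satisfies sup_{x ∈ [0, τ]} ‖ψ(x)‖ ≤ C (‖φ₊‖ + ‖φ₋‖); in other words, the (linear) solution map (φ₊, φ₋) ↦ ψ is continuous from H₊ ⊕ H₋ into C([0, τ]; H). -/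
open scoped ComplexOrder InnerProductSpace

noncomputable section

variable {H : Type*} [NormedAddCommGroup H] [InnerProductSpace ℂ H] [CompleteSpace H]

/-- `J` is a signature operator: `J = J* = J⁻¹`. -/
def IsSignatureOperator (J : H →L[ℂ] H) : Prop :=
  IsSelfAdjoint J ∧ J.comp J = ContinuousLinearMap.id ℂ H

/-- The orthogonal projection onto `H₊ = ker (J - I)`, which equals `(I + J)/2`
for a signature operator `J`. -/
def Pplus (J : H →L[ℂ] H) : H →L[ℂ] H := (2⁻¹ : ℂ) • (ContinuousLinearMap.id ℂ H + J)

/-- The orthogonal projection onto `H₋ = ker (J + I)`, which equals `(I - J)/2`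
for a signature operator `J`. -/
def Pminus (J : H →L[ℂ] H) : H →L[ℂ] H := (2⁻¹ : ℂ) • (ContinuousLinearMap.id ℂ H - J)

/-- The composition `J ∘ L` of a bounded operator `J` with an unbounded operator `L`,
as an unbounded operator with the same domain as `L`. -/
def pmapComp (J : H →L[ℂ] H) (L : H →ₗ.[ℂ] H) : H →ₗ.[ℂ] H :=
  { domain := L.domain
    toFun := (J : H →ₗ[ℂ] H).comp L.toFun }

/-- `L` is a positive operator: `⟨L h, h⟩ > 0` for every nonzero `h ∈ dom L`. -/
def IsPositivePMap (L : H →ₗ.[ℂ] H) : Prop :=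
  ∀ h : L.domain, (h : H) ≠ 0 → 0 < ⟪L h, (h : H)⟫_ℂ

/-- `B` is similar to a self-adjoint operator: there is a bounded operator `S` with bounded
inverse mapping `dom B` onto the domain of a self-adjoint operator `A` such that
`A (S h) = S (B h)` for all `h ∈ dom B`. -/
def SimilarToSelfAdjoint (B : H →ₗ.[ℂ] H) : Prop :=
  ∃ (S : H ≃L[ℂ] H) (A : H →ₗ.[ℂ] H), IsSelfAdjoint A ∧
    (A.domain : Set H) = (fun h => S h) '' (B.domain : Set H) ∧
    ∀ (h : B.domain) (hSh : S (h : H) ∈ A.domain), A ⟨S (h : H), hSh⟩ = S (B h)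

/-- `ψ` solves `ψ' = -B ψ + f` on the set `s` with a continuous derivative:
on `s`, `ψ` takes values in `dom B`, is differentiable with derivative `ψ'`,
`ψ'` is continuous on `s`, and `ψ' x = -B (ψ x) + f x`. -/
def IsStrongSolutionOn (B : H →ₗ.[ℂ] H) (f : ℝ → H) (ψ : ℝ → H) (s : Set ℝ) : Prop :=
  ∃ ψ' : ℝ → H, ContinuousOn ψ' s ∧
    ∀ x ∈ s, HasDerivAt ψ (ψ' x) x ∧
      ∃ hx : ψ x ∈ B.domain, ψ' x = -(B ⟨ψ x, hx⟩) + f x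

/-! Two estimates combine. The indefinite energy `Re ⟪J ψ, ψ⟫ = ‖P₊ ψ‖² - ‖P₋ ψ‖²` decreases
along solutions, its derivative being `-2 Re ⟪L ψ, ψ⟫ ≤ 0`; comparing it at `0` and `τ` bounds
`ψ 0` and `ψ τ` by the boundary data. Inside the interval, `φ = S ψ` solves `φ' = -A φ` with `A`
self-adjoint, so `⟪φ (c + t), φ (c - t)⟫` does not depend on `t` and
`‖φ c‖² ≤ ‖φ (c + d)‖ ‖φ (c - d)‖`. Hence `‖S ψ‖` is maximal at an endpoint of `[0, τ]`, and
`‖ψ x‖ ≤ ‖S⁻¹‖ ‖S‖ max ‖ψ 0‖ ‖ψ τ‖`. -/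

open Set

section

variable {E : Type*} [NormedAddCommGroup E] [InnerProductSpace ℂ E]
  {A : E →ₗ.[ℂ] E} {φ : ℝ → E} {a b : ℝ}

lemma HasDerivAt.continuousLinearMap_apply (T : E →L[ℂ] E) {f : ℝ → E} {v : E} {t : ℝ}
    (hf : HasDerivAt f v t) : HasDerivAt (fun s => T (f s)) (T v) t :=
  (T.restrictScalars ℝ).hasFDerivAt.comp_hasDerivAt t hf

lemma IsStrongSolutionOn.exists_hasDerivAt {B : E →ₗ.[ℂ] E} {ψ : ℝ → E} {s : Set ℝ}
    (hψ : IsStrongSolutionOn B (fun _ => 0) ψ s) :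
    ∀ t ∈ s, ∃ ht : ψ t ∈ B.domain, HasDerivAt ψ (-B ⟨ψ t, ht⟩) t := by
  obtain ⟨ψ', -, hψ'⟩ := hψ
  intro t ht
  obtain ⟨hder, hmem, heq⟩ := hψ' t ht
  exact ⟨hmem, by rwa [heq, add_zero] at hder⟩

lemma inner_add_sub_eq_inner_self_of_hasDerivAt (hA : A.IsFormalAdjoint A)
    (hc : ContinuousOn φ (Icc a b))
    (hd : ∀ t ∈ Ioo a b, ∃ ht : φ t ∈ A.domain, HasDerivAt φ (-A ⟨φ t, ht⟩) t)
    {c d : ℝ} (hd0 : 0 ≤ d) (hac : a ≤ c - d) (hcb : c + d ≤ b) :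
    ⟪φ (c + d), φ (c - d)⟫_ℂ = ⟪φ c, φ c⟫_ℂ := by
  set k : ℝ → ℂ := fun t => ⟪φ (c + t), φ (c - t)⟫_ℂ
  have hk : ContinuousOn k (Icc 0 d) := by
    refine ContinuousOn.inner (hc.comp (by fun_prop) ?_) (hc.comp (by fun_prop) ?_) <;>
      intro t ht <;> constructor <;> linarith [ht.1, ht.2]
  -- `A` is symmetric, so the two contributions `⟪u, A v⟫` and `-⟪A u, v⟫` cancel.
  have hk' : ∀ t ∈ Ico 0 d, HasDerivWithinAt k 0 (Ici t) t := by
    intro t ht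
    obtain ⟨hu, hu'⟩ := hd (c + t) ⟨by linarith [ht.1, ht.2], by linarith [ht.2]⟩
    obtain ⟨hv, hv'⟩ := hd (c - t) ⟨by linarith [ht.2], by linarith [ht.1, ht.2]⟩
    have := (HasDerivAt.inner ℂ (hu'.comp_const_add c t) (hv'.comp_const_sub c t)).hasDerivWithinAt
      (s := Ici t)
    rwa [neg_neg, inner_neg_left, ← hA ⟨_, hu⟩ ⟨_, hv⟩, add_neg_cancel] at this
  simpa [k] using constant_of_has_deriv_right_zero hk hk' d ⟨hd0, le_rfl⟩

lemma ContinuousOn.le_max_of_sq_le_mul {g : ℝ → ℝ} (hg : ContinuousOn g (Icc a b))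
    (hg0 : ∀ t, 0 ≤ g t)
    (hmid : ∀ c d, 0 ≤ d → a ≤ c - d → c + d ≤ b → g c ^ 2 ≤ g (c + d) * g (c - d)) :
    ∀ x ∈ Icc a b, g x ≤ max (g a) (g b) := by
  intro x hx
  obtain ⟨c, hc, hmax⟩ := isCompact_Icc.exists_isMaxOn ⟨x, hx⟩ hg
  refine (hmax hx).trans ?_
  -- Reflect about the maximiser `c` until one of the two points hits an endpoint.
  set d := min (c - a) (b - c)
  have hda : d ≤ c - a := min_le_left _ _
  have hdb : d ≤ b - c := min_le_right _ _
  have hsq := hmid c d (le_min (by linarith [hc.1]) (by linarith [hc.2])) (by linarith)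
    (by linarith)
  rcases min_cases (c - a) (b - c) with ⟨hd, -⟩ | ⟨hd, -⟩
  · have hle : g (c + d) ≤ g c := hmax ⟨by linarith [hc.1], by linarith⟩
    rw [show c - d = a by linarith] at hsq
    nlinarith [hg0 a, hg0 c, hg0 (c + d), le_max_left (g a) (g b)]
  · have hle : g (c - d) ≤ g c := hmax ⟨by linarith, by linarith [hc.2]⟩
    rw [show c + d = b by linarith] at hsq
    nlinarith [hg0 b, hg0 c, hg0 (c - d), le_max_right (g a) (g b)]

theorem norm_le_max_of_hasDerivAt_neg (hA : A.IsFormalAdjoint A)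
    (hc : ContinuousOn φ (Icc a b))
    (hd : ∀ t ∈ Ioo a b, ∃ ht : φ t ∈ A.domain, HasDerivAt φ (-A ⟨φ t, ht⟩) t) :
    ∀ x ∈ Icc a b, ‖φ x‖ ≤ max ‖φ a‖ ‖φ b‖ := by
  refine hc.norm.le_max_of_sq_le_mul (fun _ => norm_nonneg _) fun c d hd0 hac hcb => ?_
  calc ‖φ c‖ ^ 2 = ‖⟪φ c, φ c⟫_ℂ‖ := by rw [inner_self_eq_norm_sq_to_K]; simp
    _ = ‖⟪φ (c + d), φ (c - d)⟫_ℂ‖ := by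
      rw [inner_add_sub_eq_inner_self_of_hasDerivAt hA hc hd hd0 hac hcb]
    _ ≤ ‖φ (c + d)‖ * ‖φ (c - d)‖ := norm_inner_le_norm _ _

theorem antitoneOn_re_inner_apply_self {T : E →L[ℂ] E} {ψ : ℝ → E}
    (hT : (T : E →ₗ[ℂ] E).IsSymmetric) (hc : ContinuousOn ψ (Icc a b))
    (hd : ∀ t ∈ Ioo a b, ∃ v, HasDerivAt ψ v t ∧ (⟪T v, ψ t⟫_ℂ).re ≤ 0) :
    AntitoneOn (fun t => (⟪T (ψ t), ψ t⟫_ℂ).re) (Icc a b) := by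
  have hderiv : ∀ t ∈ Ioo a b, ∃ v, HasDerivAt (fun t => (⟪T (ψ t), ψ t⟫_ℂ).re)
      (2 * (⟪T v, ψ t⟫_ℂ).re) t ∧ (⟪T v, ψ t⟫_ℂ).re ≤ 0 := by
    intro t ht
    obtain ⟨v, hv, hneg⟩ := hd t ht
    refine ⟨v, ?_, hneg⟩
    have hre : (⟪T (ψ t), v⟫_ℂ).re = (⟪T v, ψ t⟫_ℂ).re := by
      rw [← ContinuousLinearMap.coe_coe, hT]
      exact inner_re_symm (𝕜 := ℂ) _ _
    have := Complex.reCLM.hasFDerivAt.comp_hasDerivAt t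
      (HasDerivAt.inner ℂ (hv.continuousLinearMap_apply T) hv)
    rwa [Complex.reCLM_apply, Complex.add_re, hre, ← two_mul] at this
  rw [← interior_Icc] at hderiv
  refine antitoneOn_of_deriv_nonpos (convex_Icc a b)
    (Complex.continuous_re.comp_continuousOn ((T.continuous.comp_continuousOn hc).inner hc))
    (fun t ht => ?_) fun t ht => ?_ <;> obtain ⟨v, hv, hneg⟩ := hderiv t ht
  · exact hv.differentiableAt.differentiableWithinAt
  · rw [hv.deriv]
    linarith

end

namespace IsSignatureOperator

variable {J : H →L[ℂ] H}

lemma apply_apply (hJ : IsSignatureOperator J) (h : H) : J (J h) = h :=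
  DFunLike.congr_fun hJ.2 h

lemma isSymmetric (hJ : IsSignatureOperator J) : (J : H →ₗ[ℂ] H).IsSymmetric :=
  ContinuousLinearMap.isSelfAdjoint_iff_isSymmetric.mp hJ.1

lemma norm_apply (hJ : IsSignatureOperator J) (h : H) : ‖J h‖ = ‖h‖ := by
  rw [@norm_eq_sqrt_re_inner ℂ, @norm_eq_sqrt_re_inner ℂ H, ← ContinuousLinearMap.coe_coe,
    hJ.isSymmetric, ContinuousLinearMap.coe_coe, hJ.apply_apply]

lemma norm_sq_Pplus (hJ : IsSignatureOperator J) (h : H) :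
    ‖Pplus J h‖ ^ 2 = (‖h‖ ^ 2 + (⟪J h, h⟫_ℂ).re) / 2 := by
  have : Pplus J h = (2⁻¹ : ℂ) • (h + J h) := rfl
  rw [this, norm_smul, mul_pow, @norm_add_sq ℂ, hJ.norm_apply, inner_re_symm (𝕜 := ℂ) h,
    RCLike.re_to_complex]
  norm_num
  ring

lemma norm_sq_Pminus (hJ : IsSignatureOperator J) (h : H) :
    ‖Pminus J h‖ ^ 2 = (‖h‖ ^ 2 - (⟪J h, h⟫_ℂ).re) / 2 := by
  have : Pminus J h = (2⁻¹ : ℂ) • (h - J h) := rfl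
  rw [this, norm_smul, mul_pow, @norm_sub_sq ℂ, hJ.norm_apply, inner_re_symm (𝕜 := ℂ) h,
    RCLike.re_to_complex]
  norm_num
  ring

lemma max_norm_le_of_re_inner_le (hJ : IsSignatureOperator J) {u v : H}
    (hle : (⟪J v, v⟫_ℂ).re ≤ (⟪J u, u⟫_ℂ).re) :
    max ‖u‖ ‖v‖ ≤ 2 * (‖Pplus J u‖ + ‖Pminus J v‖) := by
  have hpu := hJ.norm_sq_Pplus u
  have hmu := hJ.norm_sq_Pminus u
  have hpv := hJ.norm_sq_Pplus v
  have hmv := hJ.norm_sq_Pminus v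
  have hp := norm_nonneg (Pplus J u)
  have hm := norm_nonneg (Pminus J v)
  refine max_le (le_of_sq_le_sq ?_ (by positivity)) (le_of_sq_le_sq ?_ (by positivity))
  · nlinarith [sq_nonneg ‖Pplus J v‖, mul_nonneg hp hm]
  · nlinarith [sq_nonneg ‖Pminus J u‖, mul_nonneg hp hm]

lemma re_inner_apply_neg_pmapComp_nonpos (hJ : IsSignatureOperator J) {L : H →ₗ.[ℂ] H}
    (hL : IsPositivePMap L) (h : L.domain) :
    (⟪J (-(pmapComp J L h)), (h : H)⟫_ℂ).re ≤ 0 := by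
  have hJL : J (-(pmapComp J L h)) = -L h := by
    rw [map_neg, show pmapComp J L h = J (L h) from rfl, hJ.apply_apply]
  rw [hJL, inner_neg_left, Complex.neg_re, neg_nonpos]
  by_cases h0 : (h : H) = 0
  · simp [h0]
  · exact (Complex.pos_iff.mp (hL h h0)).1.le

end IsSignatureOperator

lemma IsSelfAdjoint.isFormalAdjoint_self {𝕜 E : Type*} [RCLike 𝕜] [NormedAddCommGroup E]
    [InnerProductSpace 𝕜 E] [CompleteSpace E] {A : E →ₗ.[𝕜] E} (hA : IsSelfAdjoint A) :
    A.IsFormalAdjoint A := by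
  have h := LinearPMap.adjoint_isFormalAdjoint hA.dense_domain
  rwa [LinearPMap.isSelfAdjoint_def.mp hA] at h

theorem SimilarToSelfAdjoint.exists_norm_le_mul_max {B : H →ₗ.[ℂ] H}
    (hB : SimilarToSelfAdjoint B) :
    ∃ K, 0 ≤ K ∧ ∀ (ψ : ℝ → H) (a b : ℝ), ContinuousOn ψ (Icc a b) →
      (∀ t ∈ Ioo a b, ∃ ht : ψ t ∈ B.domain, HasDerivAt ψ (-B ⟨ψ t, ht⟩) t) →
      ∀ x ∈ Icc a b, ‖ψ x‖ ≤ K * max ‖ψ a‖ ‖ψ b‖ := by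
  obtain ⟨S, A, hA, hdom, hAS⟩ := hB
  set S' : H →L[ℂ] H := S.toContinuousLinearMap
  set Sinv : H →L[ℂ] H := S.symm.toContinuousLinearMap
  refine ⟨‖Sinv‖ * ‖S'‖, by positivity, fun ψ a b hc hd x hx => ?_⟩
  have hSψ : ∀ t ∈ Ioo a b, ∃ ht : S (ψ t) ∈ A.domain,
      HasDerivAt (fun s => S (ψ s)) (-A ⟨S (ψ t), ht⟩) t := by
    intro t ht
    obtain ⟨hψt, hder⟩ := hd t ht
    have hSt : S (ψ t) ∈ A.domain := by
      rw [← SetLike.mem_coe, hdom]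
      exact ⟨ψ t, hψt, rfl⟩
    refine ⟨hSt, ?_⟩
    rw [hAS ⟨ψ t, hψt⟩ hSt, ← map_neg]
    exact hder.continuousLinearMap_apply S'
  have hmax := norm_le_max_of_hasDerivAt_neg hA.isFormalAdjoint_self
    (S.continuous.comp_continuousOn hc) hSψ x hx
  calc ‖ψ x‖ = ‖Sinv (S' (ψ x))‖ := by simp [Sinv, S']
    _ ≤ ‖Sinv‖ * ‖S' (ψ x)‖ := Sinv.le_opNorm _
    _ ≤ ‖Sinv‖ * (‖S'‖ * max ‖ψ a‖ ‖ψ b‖) := by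
      gcongr
      rw [mul_max_of_nonneg _ _ (norm_nonneg S')]
      exact hmax.trans (max_le_max (S'.le_opNorm _) (S'.le_opNorm _))
    _ = ‖Sinv‖ * ‖S'‖ * max ‖ψ a‖ ‖ψ b‖ := (mul_assoc _ _ _).symm

theorem statement3_general (J : H →L[ℂ] H) (hJ : IsSignatureOperator J)
    (L : H →ₗ.[ℂ] H) (hLpos : IsPositivePMap L)
    (hsim : SimilarToSelfAdjoint (pmapComp J L))
    (τ : ℝ) :
    ∃ C : ℝ, 0 < C ∧
      ∀ (φp φm : H), J φp = φp → J φm = -φm →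
        ∀ ψ : ℝ → H,
          (ContinuousOn ψ (Set.Icc 0 τ) ∧
            IsStrongSolutionOn (pmapComp J L) (fun _ => 0) ψ (Set.Ioo 0 τ) ∧
            Pplus J (ψ 0) = φp ∧ Pminus J (ψ τ) = φm) →
          ∀ x ∈ Set.Icc (0 : ℝ) τ, ‖ψ x‖ ≤ C * (‖φp‖ + ‖φm‖) := by
  obtain ⟨K, hK0, hK⟩ := hsim.exists_norm_le_mul_max
  refine ⟨2 * K + 1, by positivity, ?_⟩
  rintro _ _ - - ψ ⟨hc, hsol, rfl, rfl⟩ x hx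
  have hd := hsol.exists_hasDerivAt
  have hτ : 0 ≤ τ := hx.1.trans hx.2
  have henergy := antitoneOn_re_inner_apply_self hJ.isSymmetric hc fun t ht => by
    obtain ⟨hψt, hder⟩ := hd t ht
    exact ⟨_, hder, hJ.re_inner_apply_neg_pmapComp_nonpos hLpos ⟨ψ t, hψt⟩⟩
  have hends := hJ.max_norm_le_of_re_inner_le
    (henergy (left_mem_Icc.mpr hτ) (right_mem_Icc.mpr hτ) hτ)
  calc ‖ψ x‖ ≤ K * max ‖ψ 0‖ ‖ψ τ‖ := hK ψ 0 τ hc hd x hx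
    _ ≤ K * (2 * (‖Pplus J (ψ 0)‖ + ‖Pminus J (ψ τ)‖)) := by gcongr
    _ ≤ (2 * K + 1) * (‖Pplus J (ψ 0)‖ + ‖Pminus J (ψ τ)‖) := by
      nlinarith [norm_nonneg (Pplus J (ψ 0)), norm_nonneg (Pminus J (ψ τ))]

/-- Correctness: under the assumptions of Theorem 2.1 there is a constant
`C > 0` such that every strong solution of the boundary value problem satisfies
`sup_{x ∈ [0,τ]} ‖ψ(x)‖ ≤ C (‖φ₊‖ + ‖φ₋‖)`. -/
theorem statement3 (J : H →L[ℂ] H) (hJ : IsSignatureOperator J)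
    (L : H →ₗ.[ℂ] H) (hdense : Dense (L.domain : Set H))
    (hLsa : IsSelfAdjoint L) (hLpos : IsPositivePMap L)
    (hsim : SimilarToSelfAdjoint (pmapComp J L))
    (τ : ℝ) (hτ : 0 < τ) :
    ∃ C : ℝ, 0 < C ∧
      ∀ (φp φm : H), J φp = φp → J φm = -φm →
        ∀ ψ : ℝ → H,
          (ContinuousOn ψ (Set.Icc 0 τ) ∧
            IsStrongSolutionOn (pmapComp J L) (fun _ => 0) ψ (Set.Ioo 0 τ) ∧
            Pplus J (ψ 0) = φp ∧ Pminus J (ψ τ) = φm) →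
          ∀ x ∈ Set.Icc (0 : ℝ) τ, ‖ψ x‖ ≤ C * (‖φp‖ + ‖φm‖) :=
  statement3_general J hJ L hLpos hsim τ

end
end

section
/- Let H be a complex Hilbert space, J a signature operator on H, and B a densely defined linear operator in H such that ⟨J(Bh), h⟩ > 0 for every nonzero h ∈ dom B. Assume B is similar to a self-adjoint operator in H, i.e. there exist a bounded linear operator S on H with bounded inverse and a self-adjoint operator A in H such that S(dom B) = dom A and A(Sh) = S(Bh) for all h ∈ dom B. Then the operator L with dom L = dom B and Lh = J(Bh) is self-adjoint in H. -/
open scoped ComplexOrder InnerProductSpace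

noncomputable section

variable {H : Type*} [NormedAddCommGroup H] [InnerProductSpace ℂ H] [CompleteSpace H]

section Aux
open LinearPMap Filter

lemma aux_symm_of_adj {A : H →ₗ.[ℂ] H} (hdense : Dense (A.domain : Set H))
    (hA : A† = A) : ∀ x y : A.domain, ⟪A x, (y : H)⟫_ℂ = ⟪(x : H), A y⟫_ℂ := by
  have h := LinearPMap.adjoint_isFormalAdjoint hdense (T := A)
  rw [hA] at h
  exact fun x y => h x y

lemma aux_real_diag {A : H →ₗ.[ℂ] H} (hdense : Dense (A.domain : Set H))
    (hA : A† = A) (x : A.domain) : (⟪A x, (x : H)⟫_ℂ).im = 0 := by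
  rw [← Complex.conj_eq_iff_im, inner_conj_symm]
  exact (aux_symm_of_adj hdense hA x x).symm

omit [InnerProductSpace ℂ H] [CompleteSpace H] in
lemma aux_cauchy_of_bound {u v : ℕ → H} (hv : CauchySeq v) (C : ℝ)
    (h : ∀ n m, dist (u n) (u m) ≤ C * dist (v n) (v m)) : CauchySeq u := by
  rw [Metric.cauchySeq_iff] at hv ⊢
  intro ε hε
  have hC : (0:ℝ) < max C 1 + 1 := by positivity
  rcases hv (ε / (max C 1 + 1)) (by positivity) with ⟨N, hN⟩
  refine ⟨N, fun n hn m hm => ?_⟩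
  have h1 := hN n hn m hm
  have h2 := h n m
  have h3 : (0:ℝ) ≤ dist (v n) (v m) := dist_nonneg
  have h4 : C ≤ max C 1 + 1 := le_trans (le_max_left _ _) (by linarith)
  calc dist (u n) (u m) ≤ C * dist (v n) (v m) := h2
    _ ≤ (max C 1 + 1) * dist (v n) (v m) := by nlinarith
    _ < (max C 1 + 1) * (ε / (max C 1 + 1)) := mul_lt_mul_of_pos_left h1 hC
    _ = ε := by field_simp

/-- For self-adjoint `A` and purely imaginary nonzero `μ`, `A - μ` is surjective. -/
lemma aux_selfAdjoint_surj {A : H →ₗ.[ℂ] H} (hdense : Dense (A.domain : Set H)) (hA : A† = A)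
    (μ : ℂ) (hre : μ.re = 0) (hμ : μ ≠ 0) (f : H) :
    ∃ x : A.domain, A x - μ • (x : H) = f := by
  have him : μ.im ≠ 0 := fun h => hμ (Complex.ext hre h)
  set G : A.domain →ₗ[ℂ] H := A.toFun - μ • (A.domain.subtype) with hG
  have hGapp : ∀ x : A.domain, G x = A x - μ • (x : H) := fun x => rfl
  -- norm identity
  have hnorm : ∀ x : A.domain, ‖A x‖ ^ 2 + ‖μ‖ ^ 2 * ‖(x : H)‖ ^ 2 = ‖G x‖ ^ 2 := by
    intro x
    have hre2 : RCLike.re ⟪A x, μ • (x : H)⟫_ℂ = 0 := by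
      rw [inner_smul_right]
      have hd := aux_real_diag hdense hA x
      simp [RCLike.mul_re, RCLike.re_to_complex, RCLike.im_to_complex, hre, hd]
    rw [hGapp, norm_sub_sq (𝕜 := ℂ), hre2, norm_smul]
    ring
  have hxle : ∀ x : A.domain, ‖μ‖ * ‖(x : H)‖ ≤ ‖G x‖ := by
    intro x
    have h1 := hnorm x
    nlinarith [norm_nonneg (G x), norm_nonneg (A x), norm_nonneg ((x : H)), norm_nonneg μ,
      mul_nonneg (norm_nonneg μ) (norm_nonneg ((x : H))), sq_nonneg (‖A x‖)]
  have hAle : ∀ x : A.domain, ‖A x‖ ≤ ‖G x‖ := by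
    intro x
    have h1 := hnorm x
    nlinarith [norm_nonneg (G x), norm_nonneg (A x),
      sq_nonneg (‖μ‖ * ‖(x : H)‖), mul_pow ‖μ‖ ‖(x : H)‖ 2]
  set R : Submodule ℂ H := LinearMap.range G with hR
  -- R is closed
  have hclosed : IsClosed (R : Set H) := by
    apply IsSeqClosed.isClosed
    intro seq p hmem hp
    have hex : ∀ n, ∃ x : A.domain, G x = seq n := fun n => LinearMap.mem_range.mp (hmem n)
    choose x hx using hex
    have hμinv : (0:ℝ) < ‖μ‖ := norm_pos_iff.mpr hμ
    have hcs : CauchySeq seq := hp.cauchySeq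
    have hxc : CauchySeq (fun n => ((x n : H))) := by
      apply aux_cauchy_of_bound hcs (‖μ‖⁻¹)
      intro n m
      rw [dist_eq_norm, dist_eq_norm, ← hx n, ← hx m, ← _root_.map_sub G]
      have h5 := hxle (x n - x m)
      have hco : ((x n - x m : A.domain) : H) = (x n : H) - (x m : H) := rfl
      rw [hco] at h5
      rw [inv_mul_eq_div, le_div_iff₀ hμinv]
      linarith [h5]
    have hAc : CauchySeq (fun n => A (x n)) := by
      apply aux_cauchy_of_bound hcs 1
      intro n m
      rw [dist_eq_norm, dist_eq_norm, ← hx n, ← hx m, ← _root_.map_sub G, one_mul]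
      have h5 := hAle (x n - x m)
      rwa [LinearPMap.map_sub] at h5
    obtain ⟨xl, hxl⟩ := cauchySeq_tendsto_of_complete hxc
    obtain ⟨w, hw⟩ := cauchySeq_tendsto_of_complete hAc
    have hrel : ∀ v : A.domain, ⟪w, (v : H)⟫_ℂ = ⟪xl, A v⟫_ℂ := by
      intro v
      have h1 : Tendsto (fun n => ⟪A (x n), (v : H)⟫_ℂ) atTop (nhds ⟪w, (v : H)⟫_ℂ) :=
        hw.inner tendsto_const_nhds
      have h2 : Tendsto (fun n => ⟪((x n : H)), A v⟫_ℂ) atTop (nhds ⟪xl, A v⟫_ℂ) :=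
        hxl.inner tendsto_const_nhds
      have heq : (fun n => ⟪A (x n), (v : H)⟫_ℂ) = fun n => ⟪((x n : H)), A v⟫_ℂ :=
        funext fun n => aux_symm_of_adj hdense hA (x n) v
      rw [heq] at h1
      exact tendsto_nhds_unique h1 h2
    have hmem' : xl ∈ A†.domain :=
      LinearPMap.mem_adjoint_domain_of_exists xl ⟨w, hrel⟩
    have hmemA : xl ∈ A.domain := by rw [← hA]; exact hmem'
    have hval : A ⟨xl, hmemA⟩ = w := by
      have h2 : A† ⟨xl, hmem'⟩ = w := LinearPMap.adjoint_apply_eq hdense _ hrel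
      have hle : A† ≤ A := le_of_eq hA
      rw [← hle.2 (x := ⟨xl, hmem'⟩) (y := ⟨xl, hmemA⟩) rfl]
      exact h2
    have hlim2 : Tendsto seq atTop (nhds (w - μ • xl)) := by
      have h6 : Tendsto (fun n => A (x n) - μ • ((x n : H))) atTop (nhds (w - μ • xl)) :=
        hw.sub (hxl.const_smul μ)
      simpa only [← hGapp, hx] using h6
    have hpe : p = w - μ • xl := tendsto_nhds_unique hp hlim2
    exact ⟨⟨xl, hmemA⟩, by rw [hGapp, hval, hpe]⟩
  -- R is dense
  have horth : Rᗮ = ⊥ := by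
    rw [Submodule.eq_bot_iff]
    intro u hu
    have hu' : ∀ v : A.domain, ⟪u, A v - μ • (v : H)⟫_ℂ = 0 := by
      intro v
      have h0 : ⟪G v, u⟫_ℂ = 0 := (Submodule.mem_orthogonal R u).mp hu (G v) ⟨v, rfl⟩
      rw [← hGapp]
      exact inner_eq_zero_symm.mp h0
    have hw : ∀ v : A.domain, ⟪(starRingEnd ℂ μ) • u, (v : H)⟫_ℂ = ⟪u, A v⟫_ℂ := by
      intro v
      have h1 := hu' v
      rw [inner_sub_right, sub_eq_zero] at h1
      rw [inner_smul_left, Complex.conj_conj, h1, inner_smul_right]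
    have humem : u ∈ A†.domain := LinearPMap.mem_adjoint_domain_of_exists u ⟨_, hw⟩
    have humemA : u ∈ A.domain := by rw [← hA]; exact humem
    have hval : A ⟨u, humemA⟩ = (starRingEnd ℂ μ) • u := by
      have h2 : A† ⟨u, humem⟩ = (starRingEnd ℂ μ) • u := LinearPMap.adjoint_apply_eq hdense _ hw
      have hle : A† ≤ A := le_of_eq hA
      rw [← hle.2 (x := ⟨u, humem⟩) (y := ⟨u, humemA⟩) rfl]
      exact h2
    have hdiag := aux_real_diag hdense hA ⟨u, humemA⟩
    rw [hval, inner_smul_left, Complex.conj_conj, inner_self_eq_norm_sq_to_K] at hdiag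
    have hcases : μ.im = 0 ∨ (((‖u‖ : ℂ)) ^ 2).re = 0 := by
      simpa [Complex.mul_im, hre] using hdiag
    rcases hcases with h | h
    · exact absurd h him
    · have h5 : ‖u‖ ^ 2 = 0 := by simpa [pow_two, Complex.mul_re] using h
      have h6 : ‖u‖ = 0 := by
        simpa using pow_eq_zero_iff (n := 2) (by norm_num) |>.mp h5
      exact norm_eq_zero.mp h6
  haveI : CompleteSpace R := hclosed.completeSpace_coe
  have htop : R = ⊤ := Submodule.orthogonal_eq_bot_iff.mp horth
  have hfR : f ∈ R := htop ▸ Submodule.mem_top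
  obtain ⟨x, hxf⟩ := LinearMap.mem_range.mp hfR
  exact ⟨x, by rw [← hGapp]; exact hxf⟩

end Aux

section Main
open LinearPMap Filter

/-- If `B` is densely defined, J-positive (`⟨J B h, h⟩ > 0` for nonzero
`h ∈ dom B`), and similar to a self-adjoint operator, then `L = J B` is self-adjoint. -/
theorem statement7 (J : H →L[ℂ] H) (hJ : IsSignatureOperator J)
    (B : H →ₗ.[ℂ] H) (hdense : Dense (B.domain : Set H))
    (hJpos : ∀ h : B.domain, (h : H) ≠ 0 → 0 < ⟪J (B h), (h : H)⟫_ℂ)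
    (hsim : SimilarToSelfAdjoint B) :
    IsSelfAdjoint (pmapComp J B) := by
  obtain ⟨hJsa, hJ2⟩ := hJ
  have hJJ : ∀ x : H, J (J x) = x := fun x => ContinuousLinearMap.ext_iff.mp hJ2 x
  have hJsym : ∀ x y : H, ⟪J x, y⟫_ℂ = ⟪x, J y⟫_ℂ := fun x y =>
    (ContinuousLinearMap.isSelfAdjoint_iff_isSymmetric.mp hJsa) x y
  set L : H →ₗ.[ℂ] H := pmapComp J B with hLdef
  -- diagonal of the form is real
  have hdiag : ∀ x : L.domain, ⟪L x, (x : H)⟫_ℂ - ⟪(x : H), L x⟫_ℂ = 0 := by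
    intro x
    have him : (⟪L x, (x : H)⟫_ℂ).im = 0 := by
      by_cases hx : (x : H) = 0
      · simp [hx]
      · have hpos : 0 < ⟪L x, (x : H)⟫_ℂ := hJpos x hx
        have h2 := (Complex.lt_def.mp hpos).2
        simpa using h2.symm
    rw [← inner_conj_symm ((x : H)) (L x), Complex.conj_eq_iff_im.mpr him, sub_self]
  -- polarization : L is symmetric
  have hsym : ∀ x y : L.domain, ⟪L x, (y : H)⟫_ℂ = ⟪(x : H), L y⟫_ℂ := by
    intro x y
    have h1 := hdiag (x + y)
    have h2 := hdiag (x + Complex.I • y)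
    have hx0 := hdiag x
    have hy0 := hdiag y
    have hI : Complex.I * Complex.I = -1 := Complex.I_mul_I
    simp only [LinearPMap.map_add, LinearPMap.map_smul, Submodule.coe_add, Submodule.coe_smul,
      inner_add_left, inner_add_right, inner_smul_left, inner_smul_right, Complex.conj_I] at h1 h2
    linear_combination h1/2 - Complex.I/2 * h2 + (Complex.I - 1)/2 * hx0
      - (1 + Complex.I^3)/2 * hy0
      + (⟪L x, (y : H)⟫_ℂ - ⟪(x : H), L y⟫_ℂ - ⟪L y, (x : H)⟫_ℂ + ⟪(y : H), L x⟫_ℂ)/2 * hI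
  have hformal : L.IsFormalAdjoint L := fun x y => hsym x y
  have hdenseL : Dense (L.domain : Set H) := hdense
  have hle : L ≤ L† := hformal.le_adjoint hdenseL
  -- the similar-to-selfadjoint structure gives surjectivity of B - μ
  obtain ⟨S, A, hAsa, hdomA, hAS⟩ := hsim
  have hAadj : A† = A := hAsa
  have hAdense : Dense (A.domain : Set H) := hAsa.dense_domain
  have hsurjB : ∀ (μ : ℂ), μ.re = 0 → μ ≠ 0 → ∀ f : H,
      ∃ x : B.domain, B x - μ • (x : H) = f := by
    intro μ h1 h2 f
    obtain ⟨w, hwf⟩ := aux_selfAdjoint_surj hAdense hAadj μ h1 h2 (S f)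
    have hw : (w : H) ∈ (fun h => S h) '' (B.domain : Set H) := hdomA ▸ w.2
    obtain ⟨x0, hx0, hSx0⟩ := hw
    have hSx0' : S x0 = (w : H) := hSx0
    have hmem : S x0 ∈ A.domain := hSx0' ▸ w.2
    have hwe : w = ⟨S x0, hmem⟩ := Subtype.ext hSx0'.symm
    have hAval := hAS ⟨x0, hx0⟩ hmem
    rw [hwe] at hwf
    rw [hAval] at hwf
    refine ⟨⟨x0, hx0⟩, ?_⟩
    apply S.injective
    rw [_root_.map_sub S, map_smul S]
    exact hwf
  -- reverse inclusion : dom L† ⊆ dom L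
  have hadj_formal : L†.IsFormalAdjoint L := LinearPMap.adjoint_isFormalAdjoint hdenseL
  have hdomle : L†.domain ≤ L.domain := by
    intro y hy
    set y' : L†.domain := ⟨y, hy⟩ with hy'def
    obtain ⟨x, hxeq⟩ := hsurjB Complex.I (by simp) Complex.I_ne_zero (J (L† y') - Complex.I • y)
    have hxd : (x : H) ∈ L†.domain := hle.1 x.2
    set z : H := y - (x : H) with hzdef
    have hzd : z ∈ L†.domain := sub_mem hy hxd
    set zhat : L†.domain := ⟨z, hzd⟩ with hzhatdef
    have hLx : L† ⟨(x : H), hxd⟩ = J (B x) := (hle.2 (x := x) (y := ⟨(x : H), hxd⟩) rfl).symm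
    have hback : L† y' = J (B x) + Complex.I • (J z) := by
      have h7 := congrArg (fun t => J t) hxeq
      simp only [_root_.map_sub, _root_.map_smul] at h7
      rw [hJJ] at h7
      rw [sub_eq_iff_eq_add] at h7
      rw [h7, hzdef, _root_.map_sub, smul_sub]
      abel
    have hLz : L† zhat = Complex.I • (J z) := by
      have hy'x : zhat = y' - ⟨(x : H), hxd⟩ := Subtype.ext rfl
      rw [hy'x, LinearPMap.map_sub, hLx, hback]
      abel
    have honz : ∀ v : B.domain, ⟪J z, B v + Complex.I • (v : H)⟫_ℂ = 0 := by
      intro v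
      have h1 := hadj_formal zhat v
      rw [hLz] at h1
      rw [inner_smul_left, Complex.conj_I] at h1
      have h8 : (⟪(zhat : H), L v⟫_ℂ) = ⟪J z, B v⟫_ℂ := by
        have : L v = J (B v) := rfl
        rw [this, ← hJsym z (B v)]
      rw [h8] at h1
      rw [inner_add_right, inner_smul_right, ← h1]
      ring
    obtain ⟨v, hv⟩ := hsurjB (-Complex.I) (by simp) (by simp [Complex.I_ne_zero]) (J z)
    have hJz : J z = 0 := by
      have h2 := honz v
      have h3 : B v + Complex.I • (v : H) = J z := by
        rw [← hv, neg_smul, sub_neg_eq_add]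
      rw [h3, inner_self_eq_zero] at h2
      exact h2
    have hz0 : z = 0 := by
      have := hJJ z
      rw [hJz, _root_.map_zero] at this
      exact this.symm
    have hyx : y = (x : H) := by rwa [sub_eq_zero] at hz0
    rw [hyx]
    exact x.2
  have hge : L† ≤ L := ⟨hdomle, fun a b hab => (hle.2 hab.symm).symm⟩
  exact LinearPMap.eq_of_le_of_domain_eq hge (le_antisymm hdomle hle.1)

end Main

end
end

section
/- Let H be a complex Hilbert space, J a signature operator on H, [h, g] := ⟨Jh, g⟩ the associated indefinite inner product, and P₊, P₋ the orthogonal projections onto H₊ := ker(J − I) and H₋ := ker(J + I). Let M₊ and M₋ be closed subspaces of H such that every h ∈ H has a unique decomposition h = m₊ + m₋ with m₊ ∈ M₊, m₋ ∈ M₋, such that [m₊, m₋] = 0 for all m₊ ∈ M₊, m₋ ∈ M₋, and such that there is γ ∈ (0, 1] with [m, m] ≥ γ‖m‖² for all m ∈ M₊ and −[m, m] ≥ γ‖m‖² for all m ∈ M₋. Then there exists β ∈ (0, 1) such that: (i) for all h₊ ∈ M₊ and all m ∈ M₋ with P₋m = P₋h₊ one has −[m, m] ≤ β [h₊, h₊],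 and (ii) for all h₋ ∈ M₋ and all m ∈ M₊ with P₊m = P₊h₋ one has [m, m] ≤ β (−[h₋, h₋]). -/
open scoped ComplexOrder InnerProductSpace

noncomputable section

variable {H : Type*} [NormedAddCommGroup H] [InnerProductSpace ℂ H] [CompleteSpace H]

/-- real algebra core of the estimate -/
lemma statement8_inner_self_c {H : Type*} [NormedAddCommGroup H] [InnerProductSpace ℂ H]
    (x : H) : ⟪x,x⟫_ℂ = ((‖x‖^2 : ℝ) : ℂ) := by
  rw [inner_self_eq_norm_sq_to_K (𝕜 := ℂ) x]; norm_num

lemma statement8_keyIneq (γ x a y : ℝ) (hγ0 : 0 < γ) (hγ1 : γ ≤ 1)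
    (ha : 0 ≤ a) (hy : 0 ≤ y)
    (h1 : γ*(a^2+x^2) ≤ x^2 - a^2) (h2 : γ*(y^2+x^2) ≤ y^2 - x^2)
    (h3 : x^2 ≤ y*a) :
    x^2 - a^2 ≤ (1-γ/2)*(y^2-x^2) := by
  have hyx : 0 ≤ y^2 - x^2 := by nlinarith [sq_nonneg x, sq_nonneg y]
  rcases eq_or_lt_of_le ha with h|h
  · nlinarith [sq_nonneg x]
  · have hay : (1+γ)*a ≤ (1-γ)*y := by
      have : (1+γ)*a^2 ≤ (1-γ)*(y*a) := by nlinarith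
      nlinarith
    have hya : a ≤ y := by nlinarith
    have step1 : (1+γ)*(x^2-a^2) ≤ (1+γ)*(a*(y-a)) := by nlinarith
    have step2 : (1+γ)*(a*(y-a)) ≤ (1-γ)*(y*(y-a)) := by nlinarith
    have step3 : (1-γ)*(y*(y-a)) ≤ (1-γ)*(y^2-x^2) := by nlinarith
    have step4 : (1+γ)*(x^2-a^2) ≤ (1-γ)*(y^2-x^2) := by linarith
    nlinarith [mul_nonneg hγ0.le hyx, mul_nonneg (mul_nonneg hγ0.le hγ0.le) hyx]

section aux
variable (J : H →L[ℂ] H)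

lemma statement8_inner_J_eq (hJ : IsSignatureOperator J) (h : H) :
    ⟪J h, h⟫_ℂ = ((‖Pplus J h‖^2 - ‖Pminus J h‖^2 : ℝ) : ℂ) := by
  have hsym : ∀ x y : H, ⟪J x, y⟫_ℂ = ⟪x, J y⟫_ℂ := fun x y => hJ.1.isSymmetric x y
  have hJJ : J (J h) = h := congrArg (fun f => f h) hJ.2
  have e1 : ((‖Pplus J h‖ : ℂ))^2 = ⟪Pplus J h, Pplus J h⟫_ℂ := by
    rw [statement8_inner_self_c]; push_cast; ring
  have e2 : ((‖Pminus J h‖ : ℂ))^2 = ⟪Pminus J h, Pminus J h⟫_ℂ := by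
    rw [statement8_inner_self_c]; push_cast; ring
  have hhJ : ⟪h, J h⟫_ℂ = ⟪J h, h⟫_ℂ := (hsym h h).symm
  have hJhJh : ⟪J h, J h⟫_ℂ = ⟪h, h⟫_ℂ := by rw [hsym h (J h), hJJ]
  push_cast
  rw [e1, e2]
  simp only [Pplus, Pminus, ContinuousLinearMap.smul_apply, ContinuousLinearMap.add_apply,
    ContinuousLinearMap.sub_apply, ContinuousLinearMap.id_apply,
    inner_smul_left, inner_smul_right, inner_add_left, inner_add_right,
    inner_sub_left, inner_sub_right, hhJ, hJhJh]
  simp [Complex.conj_inv, Complex.conj_ofNat]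
  ring

lemma statement8_norm_sq_eq (hJ : IsSignatureOperator J) (h : H) :
    ‖h‖^2 = ‖Pplus J h‖^2 + ‖Pminus J h‖^2 := by
  have hsym : ∀ x y : H, ⟪J x, y⟫_ℂ = ⟪x, J y⟫_ℂ := fun x y => hJ.1.isSymmetric x y
  have hJJ : J (J h) = h := congrArg (fun f => f h) hJ.2
  have hhJ : ⟪h, J h⟫_ℂ = ⟪J h, h⟫_ℂ := (hsym h h).symm
  have hJhJh : ⟪J h, J h⟫_ℂ = ⟪h, h⟫_ℂ := by rw [hsym h (J h), hJJ]
  have key : ((‖h‖^2 : ℝ) : ℂ) = ((‖Pplus J h‖^2 + ‖Pminus J h‖^2 : ℝ) : ℂ) := by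
    have e0 : ((‖h‖ : ℂ))^2 = ⟪h, h⟫_ℂ := by
      rw [statement8_inner_self_c]; push_cast; ring
    have e1 : ((‖Pplus J h‖ : ℂ))^2 = ⟪Pplus J h, Pplus J h⟫_ℂ := by
      rw [statement8_inner_self_c]; push_cast; ring
    have e2 : ((‖Pminus J h‖ : ℂ))^2 = ⟪Pminus J h, Pminus J h⟫_ℂ := by
      rw [statement8_inner_self_c]; push_cast; ring
    push_cast
    rw [e0, e1, e2]
    simp only [Pplus, Pminus, ContinuousLinearMap.smul_apply, ContinuousLinearMap.add_apply,
      ContinuousLinearMap.sub_apply, ContinuousLinearMap.id_apply,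
      inner_smul_left, inner_smul_right, inner_add_left, inner_add_right,
      inner_sub_left, inner_sub_right, hhJ, hJhJh]
    simp [Complex.conj_inv, Complex.conj_ofNat]
    ring
  exact_mod_cast key

lemma statement8_inner_J_expand (hJ : IsSignatureOperator J) (g m : H) :
    ⟪J g, m⟫_ℂ = ⟪Pplus J g, Pplus J m⟫_ℂ - ⟪Pminus J g, Pminus J m⟫_ℂ := by
  have hsym : ∀ x y : H, ⟪J x, y⟫_ℂ = ⟪x, J y⟫_ℂ := fun x y => hJ.1.isSymmetric x y
  have hJJ : J (J m) = m := congrArg (fun f => f m) hJ.2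
  have hgJm : ⟪g, J m⟫_ℂ = ⟪J g, m⟫_ℂ := (hsym g m).symm
  have hJgJm : ⟪J g, J m⟫_ℂ = ⟪g, m⟫_ℂ := by rw [hsym g (J m), hJJ]
  simp only [Pplus, Pminus, ContinuousLinearMap.smul_apply, ContinuousLinearMap.add_apply,
    ContinuousLinearMap.sub_apply, ContinuousLinearMap.id_apply,
    inner_smul_left, inner_smul_right, inner_add_left, inner_add_right,
    inner_sub_left, inner_sub_right, hgJm, hJgJm]
  simp [Complex.conj_inv, Complex.conj_ofNat]
  ring

end aux

/-- Key Krein-space estimate: if `H = M₊ [∔] M₋` is a canonical decomposition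
into a uniformly positive subspace `M₊` and a uniformly negative subspace `M₋` (with respect to
`[h, g] = ⟨J h, g⟩`), then there is `β ∈ (0,1)` such that `-[m, m] ≤ β [h₊, h₊]` whenever
`m ∈ M₋`, `h₊ ∈ M₊` and `P₋ m = P₋ h₊`, and symmetrically. -/
theorem statement8 (J : H →L[ℂ] H) (hJ : IsSignatureOperator J)
    (Mp Mm : Submodule ℂ H)
    (hMp_closed : IsClosed (Mp : Set H)) (hMm_closed : IsClosed (Mm : Set H))
    (hdecomp : ∀ h : H, ∃! q : Mp × Mm, (q.1 : H) + (q.2 : H) = h)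
    (horth : ∀ mp ∈ Mp, ∀ mm ∈ Mm, ⟪J mp, mm⟫_ℂ = 0)
    (γ : ℝ) (hγ : γ ∈ Set.Ioc (0 : ℝ) 1)
    (hpos : ∀ m ∈ Mp, ((γ * ‖m‖ ^ 2 : ℝ) : ℂ) ≤ ⟪J m, m⟫_ℂ)
    (hneg : ∀ m ∈ Mm, ((γ * ‖m‖ ^ 2 : ℝ) : ℂ) ≤ -⟪J m, m⟫_ℂ) :
    ∃ β ∈ Set.Ioo (0 : ℝ) 1,
      (∀ hp ∈ Mp, ∀ m ∈ Mm, Pminus J m = Pminus J hp →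
        -⟪J m, m⟫_ℂ ≤ (β : ℂ) * ⟪J hp, hp⟫_ℂ) ∧
      (∀ hm ∈ Mm, ∀ m ∈ Mp, Pplus J m = Pplus J hm →
        ⟪J m, m⟫_ℂ ≤ (β : ℂ) * (-⟪J hm, hm⟫_ℂ)) := by
  obtain ⟨hγ0, hγ1⟩ := hγ
  refine ⟨1 - γ/2, ⟨by linarith, by linarith⟩, ?_, ?_⟩
  · intro hp hhp m hm hPm
    -- x = ‖P₋ hp‖ = ‖P₋ m‖, a = ‖P₊ m‖, y = ‖P₊ hp‖
    set x := ‖Pminus J hp‖ with hx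
    set a := ‖Pplus J m‖ with hadef
    set y := ‖Pplus J hp‖ with hydef
    have hxm : ‖Pminus J m‖ = x := by rw [hPm]
    -- hypotheses in real form
    have h1 : γ*(a^2+x^2) ≤ x^2 - a^2 := by
      have := hneg m hm
      rw [statement8_inner_J_eq J hJ m] at this
      have hn := statement8_norm_sq_eq J hJ m
      rw [show -(((‖Pplus J m‖^2 - ‖Pminus J m‖^2 : ℝ)) : ℂ) =
        ((‖Pminus J m‖^2 - ‖Pplus J m‖^2 : ℝ) : ℂ) by push_cast; ring] at this
      rw [Complex.real_le_real] at this
      rw [hxm] at this hn; rw [hn] at this; linarith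
    have h2 : γ*(y^2+x^2) ≤ y^2 - x^2 := by
      have := hpos hp hhp
      rw [statement8_inner_J_eq J hJ hp, Complex.real_le_real] at this
      have hn := statement8_norm_sq_eq J hJ hp
      rw [hn] at this; linarith
    have h3 : x^2 ≤ y*a := by
      have ho := horth hp hhp m hm
      rw [statement8_inner_J_expand J hJ hp m, hPm] at ho
      have hmm : ⟪Pplus J hp, Pplus J m⟫_ℂ = ((x^2 : ℝ) : ℂ) := by
        rw [sub_eq_zero] at ho
        rw [ho, statement8_inner_self_c]
      have := norm_inner_le_norm (𝕜 := ℂ) (Pplus J hp) (Pplus J m)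
      rw [hmm] at this
      have hx2 : ‖((x^2 : ℝ) : ℂ)‖ = x^2 := by
        rw [Complex.norm_real, Real.norm_eq_abs, abs_of_nonneg (sq_nonneg x)]
      rw [hx2] at this
      exact this
    have key := statement8_keyIneq γ x a y hγ0 hγ1 (norm_nonneg _) (norm_nonneg _) h1 h2 h3
    rw [statement8_inner_J_eq J hJ m, statement8_inner_J_eq J hJ hp, hxm,
      show -(((a^2 - x^2 : ℝ)) : ℂ) = ((x^2 - a^2 : ℝ) : ℂ) by push_cast; ring,
      show ((1 - γ/2 : ℝ) : ℂ) * ((y^2 - x^2 : ℝ) : ℂ) = (((1-γ/2)*(y^2-x^2) : ℝ) : ℂ) by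
        push_cast; ring,
      Complex.real_le_real]
    exact key
  · intro hm hhm m hmp hPm
    set x := ‖Pplus J hm‖ with hx
    set a := ‖Pminus J m‖ with hadef
    set y := ‖Pminus J hm‖ with hydef
    have hxm : ‖Pplus J m‖ = x := by rw [hPm]
    have h1 : γ*(a^2+x^2) ≤ x^2 - a^2 := by
      have := hpos m hmp
      rw [statement8_inner_J_eq J hJ m, Complex.real_le_real] at this
      have hn := statement8_norm_sq_eq J hJ m
      rw [hxm] at this hn; rw [hn] at this; linarith
    have h2 : γ*(y^2+x^2) ≤ y^2 - x^2 := by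
      have := hneg hm hhm
      rw [statement8_inner_J_eq J hJ hm,
        show -(((‖Pplus J hm‖^2 - ‖Pminus J hm‖^2 : ℝ)) : ℂ) =
          ((‖Pminus J hm‖^2 - ‖Pplus J hm‖^2 : ℝ) : ℂ) by push_cast; ring,
        Complex.real_le_real] at this
      have hn := statement8_norm_sq_eq J hJ hm
      rw [hn] at this; linarith
    have h3 : x^2 ≤ y*a := by
      have ho := horth m hmp hm hhm
      rw [statement8_inner_J_expand J hJ m hm, hPm] at ho
      have hmm : ⟪Pminus J m, Pminus J hm⟫_ℂ = ((x^2 : ℝ) : ℂ) := by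
        rw [sub_eq_zero] at ho
        rw [← ho, statement8_inner_self_c]
      have := norm_inner_le_norm (𝕜 := ℂ) (Pminus J m) (Pminus J hm)
      rw [hmm] at this
      have hx2 : ‖((x^2 : ℝ) : ℂ)‖ = x^2 := by
        rw [Complex.norm_real, Real.norm_eq_abs, abs_of_nonneg (sq_nonneg x)]
      rw [hx2] at this
      linarith [this]
    have key := statement8_keyIneq γ x a y hγ0 hγ1 (norm_nonneg _) (norm_nonneg _) h1 h2 h3
    rw [statement8_inner_J_eq J hJ m, statement8_inner_J_eq J hJ hm, hxm,
      show -(((x^2 - y^2 : ℝ)) : ℂ) = ((y^2 - x^2 : ℝ) : ℂ) by push_cast; ring,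
      show ((1 - γ/2 : ℝ) : ℂ) * ((y^2 - x^2 : ℝ) : ℂ) = (((1-γ/2)*(y^2-x^2) : ℝ) : ℂ) by
        push_cast; ring,
      Complex.real_le_real]
    exact key

end
end
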